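/- arXiv:1803.10493 — 10 statements merged into one kernel-verified Lean document; each statement's English description precedes it below -/
import Mathlib

section
/- Let X be a topological space and (Y,d) a metric space. If a family E of continuous functions from X to Y is finitely equicontinuous at every point of X, then E is equicontinuous (in the usual sense: for every x in X and ε > 0 there is a neighbourhood U of x such that d(f(x), f(z)) < ε for all f in E and all z in U). -/
open Set Filter Topology Metric Bornology

/-- Finite equicontinuity of a family `E` at a point `x`. -/
def FinEquicontAt {X Y : Type*} [TopologicalSpace X] [MetricSpace Y]
    (E : Set (X → Y)) (x : X) : Prop :=
  ∀ ε > (0 : ℝ), ∃ 𝓑 : Finset (Set X), ⋃₀ (𝓑 : Set (Set X)) ∈ 𝓝 x ∧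
    ∀ f ∈ E, ∀ B ∈ 𝓑, ∀ p ∈ B, ∀ q ∈ B, dist (f p) (f q) < ε

/-- Finite equicontinuity of a family `E`. -/
def FinEquicont {X Y : Type*} [TopologicalSpace X] [MetricSpace Y]
    (E : Set (X → Y)) : Prop :=
  ∀ x : X, FinEquicontAt E x

/-- A function is locally bounded if every point has an open neighbourhood with bounded image. -/
def LocBounded {X Y : Type*} [TopologicalSpace X] [MetricSpace Y] (f : X → Y) : Prop :=
  ∀ x : X, ∃ U : Set X, IsOpen U ∧ x ∈ U ∧ IsBounded (f '' U)

/-! Take a finite cover of a neighbourhood of `x` by sets of oscillation `< ε / 2`. Since the cover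
is finite, points near `x` avoid every member whose closure misses `x`, so each such point `z` lies
in some `B` with `x ∈ closure B`; continuity of `f` at `x` then gives `dist (f x) (f z) ≤ ε / 2`. -/

theorem eventually_exists_mem_closure_of_sUnion_mem_nhds {X : Type*} [TopologicalSpace X]
    {𝓑 : Set (Set X)} (h𝓑 : 𝓑.Finite) {x : X} (hx : ⋃₀ 𝓑 ∈ 𝓝 x) :
    ∀ᶠ z in 𝓝 x, ∃ B ∈ 𝓑, z ∈ B ∧ x ∈ closure B := by
  have hnear : ∀ᶠ z in 𝓝 x, ∀ B ∈ 𝓑, z ∈ B → x ∈ closure B := by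
    refine h𝓑.eventually_all.2 fun B _ => ?_
    by_cases hB : x ∈ closure B
    · exact .of_forall fun _ _ => hB
    · filter_upwards [not_frequently.1 (mem_closure_iff_frequently.not.1 hB)] with z hz hzB
      exact (hz hzB).elim
  filter_upwards [hx, hnear] with z ⟨B, hB, hzB⟩ hz
  exact ⟨B, hB, hzB, hz B hB hzB⟩

theorem dist_le_of_mem_closure_of_forall_dist_lt {X Y : Type*} [TopologicalSpace X]
    [PseudoMetricSpace Y] {f : X → Y} {B : Set X} {x : X} (hf : ContinuousAt f x)
    (hx : x ∈ closure B) {c : Y} {r : ℝ} (hB : ∀ p ∈ B, dist (f p) c < r) :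
    dist (f x) c ≤ r := by
  have himage : f '' B ⊆ ball c r := by
    rintro _ ⟨p, hp, rfl⟩
    exact hB p hp
  exact closure_ball_subset_closedBall (closure_mono himage (mem_closure_image hf hx))

theorem FinEquicontAt.equicontinuousAt {X Y : Type*} [TopologicalSpace X] [MetricSpace Y]
    {E : Set (X → Y)} {x : X} (hE : FinEquicontAt E x) (hcont : ∀ f ∈ E, ContinuousAt f x) :
    EquicontinuousAt ((↑) : E → X → Y) x := by
  refine Metric.equicontinuousAt_iff_right.2 fun ε hε => ?_
  obtain ⟨𝓑, hU, hosc⟩ := hE (ε / 2) (half_pos hε)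
  filter_upwards [eventually_exists_mem_closure_of_sUnion_mem_nhds 𝓑.finite_toSet hU]
    with z ⟨B, hB, hzB, hxB⟩ ⟨f, hf⟩
  calc dist (f x) (f z) ≤ ε / 2 :=
        dist_le_of_mem_closure_of_forall_dist_lt (hcont f hf) hxB fun p hp =>
          hosc f hf B hB p hp z hzB
    _ < ε := half_lt_self hε

theorem stmt0 {X Y : Type*} [TopologicalSpace X] [MetricSpace Y]
    (E : Set (X → Y)) (hcont : ∀ f ∈ E, Continuous f)
    (hfe : FinEquicont E) :
    ∀ x : X, ∀ ε > (0 : ℝ), ∃ U ∈ 𝓝 x, ∀ f ∈ E, ∀ z ∈ U, dist (f x) (f z) < ε := by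
  intro x ε hε
  have hequi := (hfe x).equicontinuousAt fun f hf => (hcont f hf).continuousAt
  obtain ⟨U, hU, hclose⟩ :=
    eventually_iff_exists_mem.1 (Metric.equicontinuousAt_iff_right.1 hequi ε hε)
  exact ⟨U, hU, fun f hf z hz => hclose z hz ⟨f, hf⟩⟩
end

section
/- Let X be a topological space and (Y,d) a metric space. If E ⊆ F(X,Y) is a finitely equicontinuous family of functions, then the closure of E in the topology of pointwise convergence on F(X,Y) is also finitely equicontinuous. -/
open Set Filter Topology Metric Bornology

theorem dist_apply_le_of_mem_closure {X Y : Type*} [PseudoMetricSpace Y] {E : Set (X → Y)}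
    {p q : X} {c : ℝ} (hE : ∀ f ∈ E, dist (f p) (f q) ≤ c) {g : X → Y} (hg : g ∈ closure E) :
    dist (g p) (g q) ≤ c :=
  closure_minimal (t := {f : X → Y | dist (f p) (f q) ≤ c}) hE
    (isClosed_le (by fun_prop) continuous_const) hg

/-- Pointwise limits keep the strict bound `ε / 2` only as a weak one, hence the halving. -/
theorem FinEquicontAt.closure {X Y : Type*} [TopologicalSpace X] [MetricSpace Y]
    {E : Set (X → Y)} {x : X} (hE : FinEquicontAt E x) : FinEquicontAt (closure E) x := by
  intro ε hε
  obtain ⟨𝓑, h𝓑x, h𝓑E⟩ := hE (ε / 2) (half_pos hε)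
  refine ⟨𝓑, h𝓑x, fun g hg B hB p hp q hq => ?_⟩
  calc dist (g p) (g q) ≤ ε / 2 :=
        dist_apply_le_of_mem_closure (fun f hf => (h𝓑E f hf B hB p hp q hq).le) hg
    _ < ε := half_lt_self hε

theorem stmt1 {X Y : Type*} [TopologicalSpace X] [MetricSpace Y]
    (E : Set (X → Y)) (hfe : FinEquicont E) :
    FinEquicont (closure E) :=
  fun x => (hfe x).closure
end

section
/- Let X be a topological space and (Y,d) a metric space in which every bounded set is totally bounded. If E ⊆ F(X,Y) is finitely equicontinuous and f: X → Y is locally bounded, then E ∪ {f} is finitely equicontinuous. -/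
open Set Filter Topology Metric Bornology

section

variable {X Y : Type*} [TopologicalSpace X] [MetricSpace Y]

theorem FinEquicontAt.union {E F : Set (X → Y)} {x : X} (hE : FinEquicontAt E x)
    (hF : FinEquicontAt F x) : FinEquicontAt (E ∪ F) x := by
  classical
  intro ε hε
  obtain ⟨𝓑, h𝓑x, h𝓑⟩ := hE ε hε
  obtain ⟨𝓒, h𝓒x, h𝓒⟩ := hF ε hε
  refine ⟨Finset.image₂ (· ∩ ·) 𝓑 𝓒, mem_of_superset (inter_mem h𝓑x h𝓒x) ?_, ?_⟩
  · rintro z ⟨⟨B, hB, hzB⟩, C, hC, hzC⟩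
    exact ⟨B ∩ C, Finset.mem_image₂_of_mem hB hC, hzB, hzC⟩
  · simp only [Finset.mem_image₂]
    rintro g (hg | hg) _ ⟨B, hB, C, hC, rfl⟩ p hp q hq
    exacts [h𝓑 g hg B hB p hp.1 q hq.1, h𝓒 g hg C hC p hp.2 q hq.2]

/-- The pieces are the preimages under `f` of finitely many `ε / 2`-balls covering `f '' U`. -/
theorem finEquicontAt_singleton_of_totallyBounded {f : X → Y} {x : X} {U : Set X}
    (hU : U ∈ 𝓝 x) (hfU : TotallyBounded (f '' U)) : FinEquicontAt {f} x := by
  classical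
  intro ε hε
  obtain ⟨t, ht, hcover⟩ := totallyBounded_iff.1 hfU (ε / 2) (half_pos hε)
  refine ⟨ht.toFinset.image fun c => U ∩ f ⁻¹' ball c (ε / 2), mem_of_superset hU ?_, ?_⟩
  · intro z hz
    obtain ⟨c, hc, hzc⟩ := mem_iUnion₂.1 (hcover (mem_image_of_mem f hz))
    exact ⟨_, Finset.mem_image_of_mem _ (ht.mem_toFinset.2 hc), hz, hzc⟩
  · simp only [Finset.mem_image]
    rintro g hg _ ⟨c, -, rfl⟩ p ⟨-, hp⟩ q ⟨-, hq⟩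
    rw [mem_singleton_iff.1 hg]
    calc dist (f p) (f q) ≤ dist (f p) c + dist (f q) c := dist_triangle_right _ _ _
      _ < ε / 2 + ε / 2 := add_lt_add hp hq
      _ = ε := add_halves ε

end

theorem stmt3 {X Y : Type*} [TopologicalSpace X] [MetricSpace Y]
    (htb : ∀ s : Set Y, IsBounded s → TotallyBounded s)
    (E : Set (X → Y)) (hfe : FinEquicont E)
    (f : X → Y) (hf : LocBounded f) :
    FinEquicont (E ∪ {f}) := by
  intro x
  obtain ⟨U, hUo, hxU, hfU⟩ := hf x
  exact (hfe x).union
    (finEquicontAt_singleton_of_totallyBounded (hUo.mem_nhds hxU) (htb _ hfU))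
end

section
/- Let X be a topological space and (Y,d) a metric space. If a net (f_σ) of functions from X to Y converges pointwise to f: X → Y and the set {f_σ} is finitely equicontinuous, then (f_σ) converges to f uniformly on every compact subset of X. -/
/-!
Fix `ε > 0` and a point `x`. Finite equicontinuity covers a neighbourhood of `x` by finitely
many sets `B` on which every `F σ` oscillates by less than `ε / 3`; passing to the pointwise
limit, so does `f` (up to `≤`). Comparing `F σ y` and `f y` through one base point of each `B`,
convergence at finitely many base points gives `dist (f y) (F σ y) < ε` eventually, uniformly on
that neighbourhood. So the convergence is locally uniform, hence uniform on compact sets.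
-/

open Set Filter Topology Metric Bornology

section

variable {X Y ι : Type*} [PseudoMetricSpace Y] {l : Filter ι} {F : ι → X → Y} {f : X → Y}

theorem dist_le_of_tendsto_of_forall_dist_lt [l.NeBot] {p q : X} {δ : ℝ}
    (hp : Tendsto (fun σ => F σ p) l (𝓝 (f p))) (hq : Tendsto (fun σ => F σ q) l (𝓝 (f q)))
    (hF : ∀ σ, dist (F σ p) (F σ q) < δ) :
    dist (f p) (f q) ≤ δ :=
  le_of_tendsto (hp.dist hq) (Eventually.of_forall fun σ => (hF σ).le)

theorem eventually_forall_dist_lt_of_forall_dist_lt [l.NeBot] {B : Set X} {δ : ℝ}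
    (hp : ∀ x ∈ B, Tendsto (fun σ => F σ x) l (𝓝 (f x)))
    (hB : ∀ σ, ∀ p ∈ B, ∀ q ∈ B, dist (F σ p) (F σ q) < δ) :
    ∀ᶠ σ in l, ∀ y ∈ B, dist (f y) (F σ y) < 3 * δ := by
  rcases B.eq_empty_or_nonempty with rfl | ⟨p, hpB⟩
  · simp
  have hδ : 0 < δ := dist_nonneg.trans_lt (hB l.nonempty_of_neBot.some p hpB p hpB)
  filter_upwards [(hp p hpB).eventually (ball_mem_nhds (f p) hδ)] with σ hσ y hyB
  have hfy : dist (f y) (f p) ≤ δ :=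
    dist_le_of_tendsto_of_forall_dist_lt (hp y hyB) (hp p hpB) fun τ => hB τ y hyB p hpB
  calc dist (f y) (F σ y)
      ≤ dist (f y) (f p) + dist (f p) (F σ p) + dist (F σ p) (F σ y) := dist_triangle4 _ _ _ _
    _ < δ + δ + δ :=
      add_lt_add (add_lt_add_of_le_of_lt hfy (by rwa [dist_comm])) (hB σ p hpB y hyB)
    _ = 3 * δ := by ring

end

theorem FinEquicont.tendstoLocallyUniformly {X Y ι : Type*} [TopologicalSpace X] [MetricSpace Y]
    {l : Filter ι} [l.NeBot] {F : ι → X → Y} {f : X → Y}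
    (hp : ∀ x, Tendsto (fun σ => F σ x) l (𝓝 (f x))) (hfe : FinEquicont (range F)) :
    TendstoLocallyUniformly F f l := by
  refine tendstoLocallyUniformly_iff.2 fun ε hε x => ?_
  obtain ⟨𝓑, hnhds, hosc⟩ := hfe x (ε / 3) (by positivity)
  refine ⟨_, hnhds, ?_⟩
  have hB : ∀ B ∈ 𝓑, ∀ᶠ σ in l, ∀ y ∈ B, dist (f y) (F σ y) < 3 * (ε / 3) := fun B hB𝓑 =>
    eventually_forall_dist_lt_of_forall_dist_lt (fun y _ => hp y)
      fun σ => hosc (F σ) (mem_range_self σ) B hB𝓑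
  filter_upwards [(eventually_all_finset 𝓑).2 hB] with σ hσ y ⟨B, hB𝓑, hyB⟩
  simpa [mul_div_cancel₀] using hσ B hB𝓑 y hyB

theorem stmt4 {X Y ι : Type*} [TopologicalSpace X] [MetricSpace Y]
    (l : Filter ι) [l.NeBot] (F : ι → X → Y) (f : X → Y)
    (hp : ∀ x : X, Tendsto (fun σ => F σ x) l (𝓝 (f x)))
    (hfe : FinEquicont (Set.range F)) :
    ∀ K : Set X, IsCompact K → TendstoUniformlyOn F f l K := fun _ hK =>
  (tendstoLocallyUniformlyOn_iff_tendstoUniformlyOn_of_compact hK).1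
    (hfe.tendstoLocallyUniformly hp).tendstoLocallyUniformlyOn
end

section
/- Let X be a locally compact topological space, (Y,d) a boundedly compact metric space, and suppose E ⊆ LB(X,Y) is compact in the topology of uniform convergence on compact sets. Then E is finitely equicontinuous. -/
/-!
Fix `x` and a compact neighbourhood `K` of it. Compactness of `E` for uniform convergence on
compacta gives finitely many `g ∈ E` such that every `f ∈ E` is `ε/3`-close to one of them on `K`.
Each of these finitely many `g` is bounded on `K`, so `p ↦ (g p)_g` maps `K` into a bounded, hence
totally bounded, subset of a finite power of the proper space `Y`. Pulling back a finite cover of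
that image by small balls splits `K` into finitely many pieces on which every `g` oscillates by
less than `ε/3`. On such a piece every `f ∈ E` then oscillates by less than `ε`.
-/

open Set Filter Topology Metric Bornology UniformConvergence

lemma LocBounded.isBounded_image {X Y : Type*} [TopologicalSpace X] [MetricSpace Y]
    {f : X → Y} (hf : LocBounded f) {K : Set X} (hK : IsCompact K) :
    IsBounded (f '' K) := by
  choose U hUo hxU hUb using hf
  obtain ⟨t, -, ht⟩ := hK.elim_nhds_subcover U (fun x _ => (hUo x).mem_nhds (hxU x))
  have hsub : f '' K ⊆ ⋃ x ∈ t, f '' U x := by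
    rintro _ ⟨p, hp, rfl⟩
    obtain ⟨x, hx, hpx⟩ := mem_iUnion₂.1 (ht hp)
    exact mem_iUnion₂.2 ⟨x, hx, mem_image_of_mem f hpx⟩
  exact (isBounded_biUnion t.finite_toSet |>.2 fun x _ => hUb x).subset hsub

lemma UniformOnFun.exists_finite_net_of_totallyBounded {X Y : Type*} [PseudoMetricSpace Y]
    {𝔖 : Set (Set X)} {E : Set (X →ᵤ[𝔖] Y)} (hE : TotallyBounded E) {K : Set X} (hK : K ∈ 𝔖)
    {ε : ℝ} (hε : 0 < ε) :
    ∃ T ⊆ E, T.Finite ∧ ∀ f ∈ E, ∃ g ∈ T, ∀ z ∈ K,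
      dist (UniformOnFun.toFun 𝔖 f z) (UniformOnFun.toFun 𝔖 g z) < ε := by
  obtain ⟨T, hTE, hTfin, hTcov⟩ := totallyBounded_iff_subset.1 hE _
    (UniformOnFun.gen_mem_uniformity Y 𝔖 hK (dist_mem_uniformity hε))
  refine ⟨T, hTE, hTfin, fun f hf => ?_⟩
  obtain ⟨g, hg, hfg⟩ := mem_iUnion₂.1 (hTcov hf)
  exact ⟨g, hg, hfg⟩

lemma exists_finset_cover_dist_lt_of_totallyBounded_image {X Z : Type*} [PseudoMetricSpace Z]
    {f : X → Z} {K : Set X} (hK : TotallyBounded (f '' K)) {ε : ℝ} (hε : 0 < ε) :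
    ∃ 𝓑 : Finset (Set X), K ⊆ ⋃₀ (𝓑 : Set (Set X)) ∧
      ∀ B ∈ 𝓑, B ⊆ K ∧ ∀ p ∈ B, ∀ q ∈ B, dist (f p) (f q) < ε := by
  classical
  obtain ⟨C, hCfin, hCcov⟩ := totallyBounded_iff.1 hK (ε / 2) (half_pos hε)
  refine ⟨hCfin.toFinset.image fun c => K ∩ f ⁻¹' ball c (ε / 2), ?_, ?_⟩
  · intro p hp
    obtain ⟨c, hc, hpc⟩ := mem_iUnion₂.1 (hCcov (mem_image_of_mem f hp))
    exact ⟨_, Finset.mem_coe.2 (Finset.mem_image_of_mem _ (hCfin.mem_toFinset.2 hc)), hp, hpc⟩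
  · simp only [Finset.mem_image]
    rintro _ ⟨c, -, rfl⟩
    refine ⟨inter_subset_left, fun p hp q hq => ?_⟩
    have hpc : dist (f p) c < ε / 2 := hp.2
    have hqc : dist (f q) c < ε / 2 := hq.2
    linarith [dist_triangle_right (f p) (f q) c]

lemma exists_finset_cover_forall_dist_lt_of_isBounded_image {X Y ι : Type*}
    [PseudoMetricSpace Y] [ProperSpace Y] [Finite ι] (g : ι → X → Y) {K : Set X}
    (hg : ∀ i, IsBounded (g i '' K)) {ε : ℝ} (hε : 0 < ε) :
    ∃ 𝓑 : Finset (Set X), K ⊆ ⋃₀ (𝓑 : Set (Set X)) ∧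
      ∀ B ∈ 𝓑, B ⊆ K ∧ ∀ i, ∀ p ∈ B, ∀ q ∈ B, dist (g i p) (g i q) < ε := by
  have := Fintype.ofFinite ι
  have hbdd : IsBounded ((fun p i => g i p) '' K) :=
    forall_isBounded_image_eval_iff.1 fun i => by simpa only [image_image] using hg i
  obtain ⟨𝓑, hK𝓑, h𝓑⟩ := exists_finset_cover_dist_lt_of_totallyBounded_image
    (hbdd.isCompact_closure.totallyBounded.subset subset_closure) hε
  refine ⟨𝓑, hK𝓑, fun B hB => ⟨(h𝓑 B hB).1, fun i p hp q hq => ?_⟩⟩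
  exact (dist_le_pi_dist (fun i => g i p) (fun i => g i q) i).trans_lt ((h𝓑 B hB).2 p hp q hq)

theorem stmt8 {X Y : Type*} [TopologicalSpace X] [LocallyCompactSpace X]
    [MetricSpace Y] [ProperSpace Y]
    (E : Set (X →ᵤ[{K : Set X | IsCompact K}] Y))
    (hE : ∀ f ∈ E, LocBounded (UniformOnFun.toFun {K : Set X | IsCompact K} f))
    (hc : IsCompact E) :
    FinEquicont ((UniformOnFun.toFun {K : Set X | IsCompact K}) '' E) := by
  set toFun := UniformOnFun.toFun (β := Y) {K : Set X | IsCompact K}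
  intro x ε hε
  obtain ⟨K, hKc, hKx⟩ := exists_compact_mem_nhds x
  obtain ⟨T, hTE, hTfin, hTnet⟩ :=
    UniformOnFun.exists_finite_net_of_totallyBounded hc.totallyBounded hKc
      (by positivity : 0 < ε / 3)
  have := hTfin.to_subtype
  obtain ⟨𝓑, hK𝓑, h𝓑⟩ := exists_finset_cover_forall_dist_lt_of_isBounded_image
    (fun g : T => toFun g) (fun g => (hE g (hTE g.2)).isBounded_image hKc)
    (by positivity : 0 < ε / 3)
  refine ⟨𝓑, mem_of_superset hKx hK𝓑, ?_⟩
  rintro _ ⟨f, hf, rfl⟩ B hB p hp q hq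
  obtain ⟨g, hgT, hfg⟩ := hTnet f hf
  obtain ⟨hBK, hosc⟩ := h𝓑 B hB
  calc dist (toFun f p) (toFun f q)
      ≤ dist (toFun f p) (toFun g p) + dist (toFun g p) (toFun g q)
        + dist (toFun f q) (toFun g q) := by
        linarith [dist_triangle4 (toFun f p) (toFun g p) (toFun g q) (toFun f q),
          dist_comm (toFun g q) (toFun f q)]
    _ < ε / 3 + ε / 3 + ε / 3 := by
        gcongr
        exacts [hfg p (hBK hp), hosc ⟨g, hgT⟩ p hp q hq, hfg q (hBK hq)]
    _ = ε := by ring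
end

section
/- Let X be a locally compact topological space, (Y,d) a boundedly compact metric space, and suppose E ⊆ LB(X,Y) is closed in the topology of uniform convergence on compact sets, pointwise bounded, and finitely equicontinuous. Then E is compact in (LB(X,Y), τ_UC). -/
/-!
The locally bounded functions form a closed set for uniform convergence on compacta, because
every point has a compact neighbourhood; hence `E` is closed, so complete, and it remains to see
that it is totally bounded. Given a compact `K` and `ε > 0`, finite equicontinuity and compactness
cover `K` by finitely many sets on each of which every `f ∈ E` oscillates by less than `ε`. Pick
one point in each; since `Y` is proper, the values of `E` at these finitely many points form a
relatively compact set, and an `ε`-net for them is a `3ε`-net for `E` uniformly on `K`.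
-/

open Set Filter Topology Metric Bornology UniformConvergence

section LocBounded

variable {X Y : Type*} [TopologicalSpace X] [MetricSpace Y]

theorem locBounded_iff_forall_exists_mem_nhds {f : X → Y} :
    LocBounded f ↔ ∀ x, ∃ U ∈ 𝓝 x, IsBounded (f '' U) := by
  refine ⟨fun hf x => ?_, fun hf x => ?_⟩
  · obtain ⟨U, hUo, hxU, hU⟩ := hf x
    exact ⟨U, hUo.mem_nhds hxU, hU⟩
  · obtain ⟨U, hUx, hU⟩ := hf x
    exact ⟨interior U, isOpen_interior, mem_interior_iff_mem_nhds.2 hUx,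
      hU.subset (image_mono interior_subset)⟩

/-- Near `x`, a limit `f` stays within distance `1` of some locally bounded `g`. -/
theorem isClosed_setOf_locBounded {𝔖 : Set (Set X)} (h𝔖 : ∀ x, ∃ K ∈ 𝔖, K ∈ 𝓝 x) :
    IsClosed {f : X →ᵤ[𝔖] Y | LocBounded (UniformOnFun.toFun 𝔖 f)} := by
  refine isClosed_of_closure_subset fun f hf => locBounded_iff_forall_exists_mem_nhds.2 fun x => ?_
  obtain ⟨K, hK, hKx⟩ := h𝔖 x
  obtain ⟨g, hfg, hg⟩ := UniformSpace.mem_closure_iff_ball.1 hf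
    (UniformOnFun.gen_mem_uniformity Y 𝔖 hK (dist_mem_uniformity one_pos))
  obtain ⟨U, hUx, hgU⟩ := locBounded_iff_forall_exists_mem_nhds.1 hg x
  refine ⟨U ∩ K, inter_mem hUx hKx, (hgU.thickening (δ := 1)).subset ?_⟩
  rintro _ ⟨z, ⟨hzU, hzK⟩, rfl⟩
  exact mem_thickening_iff.2 ⟨_, mem_image_of_mem _ hzU, hfg z hzK⟩

end LocBounded

section FiniteNets

variable {ι X Y : Type*} [PseudoMetricSpace Y] [ProperSpace Y]

theorem exists_finite_net_on_finite_of_isBounded {F : Set ι} (φ : ι → X → Y) {S : Set X}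
    (hS : S.Finite) (hpb : ∀ x ∈ S, IsBounded ((φ · x) '' F)) {δ : ℝ} (hδ : 0 < δ) :
    ∃ t ⊆ F, t.Finite ∧ ∀ i ∈ F, ∃ j ∈ t, ∀ x ∈ S, dist (φ i x) (φ j x) < δ := by
  have := hS.fintype
  let ev : ι → S → Y := fun i x => φ i x
  have htb : TotallyBounded (ev '' F) :=
    (isCompact_univ_pi fun x : S => (hpb x x.2).isCompact_closure).totallyBounded.subset <| by
      rintro _ ⟨i, hi, rfl⟩ x -
      exact subset_closure (mem_image_of_mem _ hi)
  obtain ⟨t, htF, htfin, hcover⟩ := exists_subset_image_finite_and.1 <|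
    htb.exists_subset (dist_mem_uniformity hδ)
  refine ⟨t, htF, htfin, fun i hi => ?_⟩
  obtain ⟨_, ⟨j, hjt, rfl⟩, hij⟩ := mem_iUnion₂.1 (hcover (mem_image_of_mem ev hi))
  exact ⟨j, hjt, fun x hx => (dist_pi_lt_iff hδ).1 hij ⟨x, hx⟩⟩

theorem exists_finite_net_of_finite_cover {F : Set ι} (φ : ι → X → Y)
    (hpb : ∀ x, IsBounded ((φ · x) '' F)) {K : Set X} {𝓒 : Set (Set X)} (h𝓒 : 𝓒.Finite)
    (hK : K ⊆ ⋃₀ 𝓒) {ε : ℝ} (hε : 0 < ε)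
    (hosc : ∀ i ∈ F, ∀ B ∈ 𝓒, ∀ p ∈ B, ∀ q ∈ B, dist (φ i p) (φ i q) < ε) :
    ∃ t ⊆ F, t.Finite ∧ ∀ i ∈ F, ∃ j ∈ t, ∀ x ∈ K, dist (φ i x) (φ j x) < 3 * ε := by
  let S : Set X := {p | ∃ (B : Set X) (hB : B ∈ {B ∈ 𝓒 | B.Nonempty}), hB.2.some = p}
  have hS : S.Finite := (h𝓒.sep _).dependent_image _
  obtain ⟨t, htF, htfin, ht⟩ := exists_finite_net_on_finite_of_isBounded φ hS (fun x _ => hpb x) hε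
  refine ⟨t, htF, htfin, fun i hi => ?_⟩
  obtain ⟨j, hjt, hij⟩ := ht i hi
  refine ⟨j, hjt, fun x hx => ?_⟩
  obtain ⟨B, hB, hxB⟩ := hK hx
  have hBne : B.Nonempty := ⟨x, hxB⟩
  have hpS : hBne.some ∈ S := ⟨B, ⟨hB, hBne⟩, rfl⟩
  calc dist (φ i x) (φ j x)
      ≤ dist (φ i x) (φ i hBne.some) + dist (φ i hBne.some) (φ j hBne.some)
        + dist (φ j hBne.some) (φ j x) := dist_triangle4 _ _ _ _
    _ < ε + ε + ε := by
      gcongr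
      · exact hosc i hi B hB x hxB _ hBne.some_mem
      · exact hij _ hpS
      · exact hosc j (htF hjt) B hB _ hBne.some_mem x hxB
    _ = 3 * ε := by ring

end FiniteNets

theorem FinEquicont.exists_finite_cover {X Y : Type*} [TopologicalSpace X] [MetricSpace Y]
    {F : Set (X → Y)} (hF : FinEquicont F) {K : Set X} (hK : IsCompact K) {ε : ℝ} (hε : 0 < ε) :
    ∃ 𝓒 : Set (Set X), 𝓒.Finite ∧ K ⊆ ⋃₀ 𝓒 ∧
      ∀ f ∈ F, ∀ B ∈ 𝓒, ∀ p ∈ B, ∀ q ∈ B, dist (f p) (f q) < ε := by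
  choose 𝓑 h𝓑 hosc using fun x => hF x ε hε
  obtain ⟨t, -, htK⟩ := hK.elim_nhds_subcover (fun x => ⋃₀ (𝓑 x : Set (Set X))) fun x _ => h𝓑 x
  refine ⟨⋃ x ∈ t, 𝓑 x, t.finite_toSet.biUnion fun x _ => (𝓑 x).finite_toSet, ?_, ?_⟩
  · simpa only [sUnion_iUnion] using htK
  · simp only [mem_iUnion]
    rintro f hf B ⟨x, -, hB⟩
    exact hosc x f hf B hB

theorem UniformOnFun.totallyBounded_of_forall_exists_finite_net {X Y : Type*}
    [PseudoMetricSpace Y] {𝔖 : Set (Set X)} (hne : 𝔖.Nonempty) (hdir : DirectedOn (· ⊆ ·) 𝔖)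
    {F : Set (X →ᵤ[𝔖] Y)}
    (hnet : ∀ K ∈ 𝔖, ∀ ε > 0, ∃ t : Set (X →ᵤ[𝔖] Y), t.Finite ∧
      ∀ f ∈ F, ∃ g ∈ t, ∀ x ∈ K, dist (UniformOnFun.toFun 𝔖 f x) (UniformOnFun.toFun 𝔖 g x) < ε) :
    TotallyBounded F := by
  rw [(UniformOnFun.hasBasis_uniformity_of_basis X Y 𝔖 hne hdir
    uniformity_basis_dist).totallyBounded_iff]
  rintro ⟨K, ε⟩ ⟨hK, hε⟩
  obtain ⟨t, ht, hF⟩ := hnet K hK ε hε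
  refine ⟨t, ht, fun f hf => ?_⟩
  obtain ⟨g, hgt, hfg⟩ := hF f hf
  exact mem_iUnion₂.2 ⟨g, hgt, hfg⟩

theorem stmt9 {X Y : Type*} [TopologicalSpace X] [LocallyCompactSpace X]
    [MetricSpace Y] [ProperSpace Y]
    (E : Set (X →ᵤ[{K : Set X | IsCompact K}] Y))
    (hE : ∀ f ∈ E, LocBounded (UniformOnFun.toFun {K : Set X | IsCompact K} f))
    (hcl : IsClosed ((Subtype.val ⁻¹' E) :
        Set {f : X →ᵤ[{K : Set X | IsCompact K}] Y //
          LocBounded (UniformOnFun.toFun {K : Set X | IsCompact K} f)}))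
    (hpb : ∀ x : X, IsBounded
        ((fun f : X →ᵤ[{K : Set X | IsCompact K}] Y =>
          UniformOnFun.toFun {K : Set X | IsCompact K} f x) '' E))
    (hfe : FinEquicont ((UniformOnFun.toFun {K : Set X | IsCompact K}) '' E)) :
    IsCompact E := by
  have hEc : IsClosed E := by
    have h := hcl.trans (isClosed_setOf_locBounded fun x => exists_compact_mem_nhds x)
    convert h using 1
    exact (Subtype.image_preimage_coe _ E).trans (inter_eq_right.2 hE) |>.symm
  refine isCompact_iff_totallyBounded_isComplete.2 ⟨?_, hEc.isComplete⟩
  refine UniformOnFun.totallyBounded_of_forall_exists_finite_net ⟨∅, isCompact_empty⟩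
    (fun K₁ h₁ K₂ h₂ => ⟨K₁ ∪ K₂, h₁.union h₂, subset_union_left, subset_union_right⟩)
    fun K hK ε hε => ?_
  obtain ⟨𝓒, h𝓒, hK𝓒, hosc⟩ := hfe.exists_finite_cover hK (by positivity : 0 < ε / 3)
  obtain ⟨t, -, ht, hnet⟩ := exists_finite_net_of_finite_cover (UniformOnFun.toFun _) hpb h𝓒 hK𝓒
    (by positivity) fun f hf => hosc _ (mem_image_of_mem _ hf)
  exact ⟨t, ht, by simpa only [mul_div_cancel₀ ε three_ne_zero] using hnet⟩
end

section
/- Let X be a compact topological space and (Y,d) a boundedly compact metric space. If (f_n) is a sequence of quasicontinuous functions from X to Y that is uniformly bounded and finitely equicontinuous, then there is a subsequence (f_{n_k}) converging uniformly on X to some quasicontinuous function. -/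
/-!
Applying finite equicontinuity with `ε = 1/(m+1)` and compactness of `X` gives, for each `m`, a
finite set of points such that every point of `X` is `1/(m+1)`-close to one of them for all the
`f n` at once. These points form a countable set `D`. Since the values lie in a compact set, a
diagonal subsequence converges at every point of `D`. An `ε/3` argument through the finite nets
then shows that the subsequence is uniformly Cauchy on `X`. Its pointwise limit is therefore a
uniform limit, and quasicontinuity passes to uniform limits.
-/

open Set Filter Topology Metric Bornology

/-- Quasicontinuity of `f` at `x`. -/
def QuasiContAt {X Y : Type*} [TopologicalSpace X] [TopologicalSpace Y]
    (f : X → Y) (x : X) : Prop :=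
  ∀ V : Set Y, IsOpen V → f x ∈ V → ∀ U : Set X, IsOpen U → x ∈ U →
    ∃ W : Set X, IsOpen W ∧ W.Nonempty ∧ W ⊆ U ∧ f '' W ⊆ V

/-- Quasicontinuity. -/
def QuasiCont {X Y : Type*} [TopologicalSpace X] [TopologicalSpace Y] (f : X → Y) : Prop :=
  ∀ x : X, QuasiContAt f x

section QuasiCont

variable {ι X Y : Type*} [TopologicalSpace X] [PseudoMetricSpace Y]

theorem QuasiContAt.of_tendstoUniformly {F : ι → X → Y} {g : X → Y} {l : Filter ι} [l.NeBot]
    {x : X} (hF : ∀ i, QuasiContAt (F i) x) (hFg : TendstoUniformly F g l) :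
    QuasiContAt g x := by
  intro V hV hxV U hU hxU
  obtain ⟨ε, hε, hball⟩ := Metric.isOpen_iff.1 hV _ hxV
  obtain ⟨i, hi⟩ := (Metric.tendstoUniformly_iff.1 hFg (ε / 3) (by positivity)).exists
  obtain ⟨W, hWo, hWne, hWU, hWV⟩ :=
    hF i (ball (F i x) (ε / 3)) isOpen_ball (mem_ball_self (by positivity)) U hU hxU
  refine ⟨W, hWo, hWne, hWU, ?_⟩
  rintro _ ⟨w, hw, rfl⟩
  apply hball
  have hw' : dist (F i w) (F i x) < ε / 3 := hWV ⟨w, hw, rfl⟩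
  calc dist (g w) (g x) ≤ dist (g w) (F i w) + dist (F i w) (F i x) + dist (F i x) (g x) :=
        dist_triangle4 _ _ _ _
    _ < ε / 3 + ε / 3 + ε / 3 := by
        gcongr
        · exact hi w
        · rw [dist_comm]; exact hi x
    _ = ε := by ring

theorem QuasiCont.of_tendstoUniformly {F : ι → X → Y} {g : X → Y} {l : Filter ι} [l.NeBot]
    (hF : ∀ i, QuasiCont (F i)) (hFg : TendstoUniformly F g l) : QuasiCont g :=
  fun x => .of_tendstoUniformly (fun i => hF i x) hFg

end QuasiCont

namespace FinEquicont

variable {X Y : Type*} [TopologicalSpace X] [CompactSpace X] [MetricSpace Y] {E : Set (X → Y)}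

theorem exists_finite_cover_s10 (hE : FinEquicont E) {ε : ℝ} (hε : 0 < ε) :
    ∃ 𝓒 : Finset (Set X), (∀ x, ∃ C ∈ 𝓒, x ∈ C) ∧
      ∀ f ∈ E, ∀ C ∈ 𝓒, ∀ p ∈ C, ∀ q ∈ C, dist (f p) (f q) < ε := by
  classical
  choose 𝓑 h𝓑 hosc using fun x => hE x ε hε
  obtain ⟨t, ht⟩ := CompactSpace.elim_nhds_subcover (fun x => ⋃₀ (𝓑 x : Set (Set X))) h𝓑
  refine ⟨t.biUnion 𝓑, fun x => ?_, fun f hf C hC => ?_⟩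
  · have hx : x ∈ ⋃ y ∈ t, ⋃₀ (𝓑 y : Set (Set X)) := ht ▸ trivial
    obtain ⟨y, hy, C, hC, hxC⟩ := mem_iUnion₂.1 hx
    exact ⟨C, Finset.mem_biUnion.2 ⟨y, hy, hC⟩, hxC⟩
  · obtain ⟨y, -, hC⟩ := Finset.mem_biUnion.1 hC
    exact hosc y f hf C hC

theorem exists_finite_net (hE : FinEquicont E) {ε : ℝ} (hε : 0 < ε) :
    ∃ S : Set X, S.Finite ∧ ∀ x, ∃ s ∈ S, ∀ f ∈ E, dist (f x) (f s) < ε := by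
  obtain ⟨𝓒, hcover, hosc⟩ := hE.exists_finite_cover_s10 hε
  refine ⟨⋃ C ∈ 𝓒, ⋃ h : C.Nonempty, {h.some},
    𝓒.finite_toSet.biUnion fun C _ => finite_iUnion fun _ => finite_singleton _, fun x => ?_⟩
  obtain ⟨C, hC, hxC⟩ := hcover x
  have hne : C.Nonempty := ⟨x, hxC⟩
  exact ⟨hne.some, mem_biUnion hC (mem_iUnion_of_mem hne rfl),
    fun f hf => hosc f hf C hC x hxC _ hne.some_mem⟩

theorem exists_countable_nets (hE : FinEquicont E) :
    ∃ D : Set X, D.Countable ∧ ∀ ε > 0, ∃ S ⊆ D, S.Finite ∧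
      ∀ x, ∃ s ∈ S, ∀ f ∈ E, dist (f x) (f s) < ε := by
  choose S hSfin hS using fun m : ℕ => hE.exists_finite_net (Nat.one_div_pos_of_nat (n := m))
  refine ⟨⋃ m, S m, countable_iUnion fun m => (hSfin m).countable, fun ε hε => ?_⟩
  obtain ⟨m, hm⟩ := exists_nat_one_div_lt hε
  refine ⟨S m, subset_iUnion S m, hSfin m, fun x => ?_⟩
  obtain ⟨s, hs, hclose⟩ := hS m x
  exact ⟨s, hs, fun f hf => (hclose f hf).trans hm⟩

end FinEquicont

section SequencesOfFunctions

variable {X Y : Type*} [PseudoMetricSpace Y]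

theorem exists_subseq_tendsto_of_countable {D : Set X} (hD : D.Countable) {K : Set Y}
    (hK : IsCompact K) {F : ℕ → X → Y} (hFK : ∀ n, ∀ x ∈ D, F n x ∈ K) :
    ∃ φ : ℕ → ℕ, StrictMono φ ∧ ∀ x ∈ D, ∃ y, Tendsto (fun k => F (φ k) x) atTop (𝓝 y) := by
  have : Countable D := hD.to_subtype
  obtain ⟨L, -, φ, hφ, hL⟩ := (isCompact_univ_pi fun _ : D => hK).tendsto_subseq
    (x := fun n (x : D) => F n x) fun n x _ => hFK n x x.2
  exact ⟨φ, hφ, fun x hx => ⟨L ⟨x, hx⟩, tendsto_pi_nhds.1 hL ⟨x, hx⟩⟩⟩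

theorem uniformCauchySeqOn_of_cauchySeq_on_nets {F : ℕ → X → Y} {D : Set X}
    (hnet : ∀ ε > 0, ∃ S ⊆ D, S.Finite ∧ ∀ x, ∃ s ∈ S, ∀ n, dist (F n x) (F n s) < ε)
    (hD : ∀ s ∈ D, CauchySeq fun n => F n s) : UniformCauchySeqOn F atTop univ := by
  intro u hu
  obtain ⟨ε, hε, hεu⟩ := mem_uniformity_dist.1 hu
  obtain ⟨S, hSD, hSfin, hS⟩ := hnet (ε / 3) (by positivity)
  have hSclose : ∀ᶠ p in atTop ×ˢ atTop, ∀ s ∈ S, dist (F p.1 s) (F p.2 s) < ε / 3 := by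
    refine (eventually_all_finite hSfin).2 fun s hs => ?_
    obtain ⟨N, hN⟩ := Metric.cauchySeq_iff.1 (hD s (hSD hs)) (ε / 3) (by positivity)
    exact ((eventually_ge_atTop N).prod_mk (eventually_ge_atTop N)).mono
      fun p hp => hN _ hp.1 _ hp.2
  filter_upwards [hSclose] with p hp x _
  obtain ⟨s, hs, hxs⟩ := hS x
  apply hεu
  calc dist (F p.1 x) (F p.2 x)
        ≤ dist (F p.1 x) (F p.1 s) + dist (F p.1 s) (F p.2 s) + dist (F p.2 s) (F p.2 x) :=
        dist_triangle4 _ _ _ _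
    _ < ε / 3 + ε / 3 + ε / 3 := by
        gcongr
        · exact hxs p.1
        · exact hp s hs
        · rw [dist_comm]; exact hxs p.2
    _ = ε := by ring

end SequencesOfFunctions

theorem UniformCauchySeqOn.exists_tendstoUniformly_of_isComplete {ι X Y : Type*}
    [Nonempty ι] [SemilatticeSup ι] [UniformSpace Y] {F : ι → X → Y} {K : Set Y}
    (hK : IsComplete K) (hFK : ∀ i x, F i x ∈ K) (hF : UniformCauchySeqOn F atTop univ) :
    ∃ g, TendstoUniformly F g atTop := by
  choose g hg using fun x =>
    (cauchySeq_tendsto_of_isComplete hK (fun i => hFK i x) (hF.cauchySeq (mem_univ x))).imp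
      fun _ => And.right
  exact ⟨g, tendstoUniformlyOn_univ.1 (hF.tendstoUniformlyOn_of_tendsto fun x _ => hg x)⟩

theorem stmt10_general {X Y : Type*} [TopologicalSpace X] [CompactSpace X]
    [MetricSpace Y]
    (f : ℕ → X → Y) (hq : ∀ n, QuasiCont (f n))
    (hub : ∃ K : Set Y, IsCompact K ∧ ∀ n, Set.range (f n) ⊆ K)
    (hfe : FinEquicont (Set.range f)) :
    ∃ φ : ℕ → ℕ, StrictMono φ ∧ ∃ g : X → Y, QuasiCont g ∧
      TendstoUniformly (fun k => f (φ k)) g atTop := by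
  obtain ⟨K, hK, hfK⟩ := hub
  have hfK' : ∀ n x, f n x ∈ K := fun n x => hfK n (mem_range_self x)
  obtain ⟨D, hDc, hDnet⟩ := hfe.exists_countable_nets
  obtain ⟨φ, hφ, hconv⟩ := exists_subseq_tendsto_of_countable hDc hK fun n x _ => hfK' n x
  have hCauchy : UniformCauchySeqOn (fun k => f (φ k)) atTop univ := by
    refine uniformCauchySeqOn_of_cauchySeq_on_nets (D := D) (fun ε hε => ?_) fun x hx => ?_
    · obtain ⟨S, hSD, hSfin, hS⟩ := hDnet ε hε
      exact ⟨S, hSD, hSfin, fun x =>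
        (hS x).imp fun _ ⟨hs, hclose⟩ => ⟨hs, fun k => hclose _ (mem_range_self _)⟩⟩
    · obtain ⟨y, hy⟩ := hconv x hx
      exact hy.cauchySeq
  obtain ⟨g, hg⟩ :=
    hCauchy.exists_tendstoUniformly_of_isComplete hK.isComplete fun k => hfK' (φ k)
  exact ⟨φ, hφ, g, .of_tendstoUniformly (fun k => hq (φ k)) hg, hg⟩

theorem stmt10 {X Y : Type*} [TopologicalSpace X] [CompactSpace X]
    [MetricSpace Y] [ProperSpace Y]
    (f : ℕ → X → Y) (hq : ∀ n, QuasiCont (f n))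
    (hub : ∃ K : Set Y, IsCompact K ∧ ∀ n, Set.range (f n) ⊆ K)
    (hfe : FinEquicont (Set.range f)) :
    ∃ φ : ℕ → ℕ, StrictMono φ ∧ ∃ g : X → Y, QuasiCont g ∧
      TendstoUniformly (fun k => f (φ k)) g atTop :=
  stmt10_general f hq hub hfe
end

section
/- Let X be a compact topological space. If (f_n) is a sequence of lower semicontinuous functions from X to ℝ that is uniformly bounded and finitely equicontinuous, then there is a subsequence (f_{n_k}) converging uniformly on X. -/
/-!
By compactness, finite equicontinuity provides, for every `ε > 0`, a finite set `S` of points such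
that every point is `ε`-indistinguishable from some point of `S` simultaneously for all `f n`.
Since the values at the finitely many points of `S` range over bounded sets, a pigeonhole argument
on their `ε`-approximants gives a finite `4ε`-net of the sequence for the sup distance. Hence the
sequence is totally bounded in the complete space `X →ᵤ ℝ`, and a subsequence converges there,
that is, uniformly.
-/

open Set Filter Topology Metric Bornology

open scoped Uniformity UniformConvergence

theorem FinEquicont.exists_finite_net_s11 {X Y : Type*} [TopologicalSpace X] [CompactSpace X]
    [MetricSpace Y] {E : Set (X → Y)} (hE : FinEquicont E) {ε : ℝ} (hε : 0 < ε) :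
    ∃ S : Set X, S.Finite ∧ ∀ x, ∃ s ∈ S, ∀ f ∈ E, dist (f x) (f s) < ε := by
  choose 𝓑 h𝓑 hosc using fun x => hE x ε hε
  obtain ⟨t, -, ht⟩ := isCompact_univ.elim_nhds_subcover (fun x => ⋃₀ (𝓑 x : Set (Set X)))
    fun x _ => h𝓑 x
  set P : Set (Set X) := {B | ∃ y ∈ t, B ∈ 𝓑 y ∧ B.Nonempty}
  have hP : P.Finite := (t.finite_toSet.biUnion fun y _ => (𝓑 y).finite_toSet).subset
    fun B ⟨y, hy, hB, _⟩ => mem_iUnion₂.2 ⟨y, hy, hB⟩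
  have hPne : ∀ B ∈ P, B.Nonempty := fun B ⟨_, _, _, hB⟩ => hB
  choose r hr using hPne
  refine ⟨{s | ∃ B hB, r B hB = s}, hP.dependent_image r, fun x => ?_⟩
  obtain ⟨y, hy, B, hB, hxB⟩ : ∃ y ∈ t, ∃ B ∈ 𝓑 y, x ∈ B := by
    simpa using ht (mem_univ x)
  have hBP : B ∈ P := ⟨y, hy, hB, x, hxB⟩
  exact ⟨r B hBP, ⟨B, hBP, rfl⟩, fun f hf => hosc y f hf B hB x hxB _ (hr B hBP)⟩

theorem exists_finite_uniform_net {ι X Y : Type*} [PseudoMetricSpace Y] {f : ι → X → Y}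
    (hf : ∀ x, TotallyBounded (range fun i => f i x)) {S : Set X} (hS : S.Finite) {ε : ℝ}
    (hε : 0 < ε) (hSf : ∀ x, ∃ s ∈ S, ∀ i, dist (f i x) (f i s) < ε) :
    ∃ N : Set ι, N.Finite ∧ ∀ i, ∃ j ∈ N, ∀ x, dist (f i x) (f j x) < 4 * ε := by
  choose T hT hfT using fun s : S => Metric.totallyBounded_iff.1 (hf s) ε hε
  have hpattern : ∀ i (s : S), ∃ t : T s, dist (f i s) t < ε := fun i s => by
    obtain ⟨t, ht, hit⟩ := mem_iUnion₂.1 (hfT s (mem_range_self i))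
    exact ⟨⟨t, ht⟩, hit⟩
  choose σ hσ using hpattern
  have := hS.to_subtype
  have := fun s => (hT s).to_subtype
  obtain ⟨N, hNσ, hNinj⟩ := exists_image_eq_and_injOn univ σ
  refine ⟨N, .of_finite_image (hNσ ▸ toFinite _) hNinj, fun i => ?_⟩
  obtain ⟨j, hjN, hji⟩ : σ i ∈ σ '' N := hNσ ▸ mem_image_of_mem σ (mem_univ i)
  refine ⟨j, hjN, fun x => ?_⟩
  obtain ⟨s, hs, hxs⟩ := hSf x
  have hti := hσ i ⟨s, hs⟩
  have htj := hσ j ⟨s, hs⟩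
  -- `i` and `j` have the same pattern of `ε`-approximants on `S`, so they are `4ε`-close.
  rw [hji] at htj
  set t : Y := (σ i ⟨s, hs⟩ : Y)
  calc dist (f i x) (f j x)
      ≤ dist (f i x) (f i s) + dist (f i s) t + dist t (f j s) + dist (f j s) (f j x) := by
        linarith [dist_triangle4 (f i x) (f i s) t (f j x), dist_triangle t (f j s) (f j x)]
    _ < ε + ε + ε + ε := by
        gcongr
        · exact hxs i
        · rwa [dist_comm]
        · rw [dist_comm]; exact hxs j
    _ = 4 * ε := by ring

instance UniformFun.isCountablyGenerated_uniformity {α β : Type*} [UniformSpace β]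
    [IsCountablyGenerated (𝓤 β)] : IsCountablyGenerated (𝓤 (α →ᵤ β)) :=
  let ⟨_, hV⟩ := exists_antitone_basis (𝓤 β)
  (UniformFun.hasBasis_uniformity_of_basis α β hV.toHasBasis).isCountablyGenerated

theorem TotallyBounded.tendsto_subseq {α : Type*} [UniformSpace α] [CompleteSpace α]
    [IsCountablyGenerated (𝓤 α)] {x : ℕ → α} (hx : TotallyBounded (range x)) :
    ∃ a, ∃ φ : ℕ → ℕ, StrictMono φ ∧ Tendsto (x ∘ φ) atTop (𝓝 a) :=
  let ⟨a, _, φ, hφ, h⟩ := (hx.closure.isCompact_of_isClosed isClosed_closure).tendsto_subseq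
    fun n => subset_closure (mem_range_self n)
  ⟨a, φ, hφ, h⟩

theorem totallyBounded_range_ofFun_of_finEquicont {ι X Y : Type*} [TopologicalSpace X]
    [CompactSpace X] [MetricSpace Y] {f : ι → X → Y}
    (hf : ∀ x, TotallyBounded (range fun i => f i x)) (hfe : FinEquicont (range f)) :
    TotallyBounded (range fun i => UniformFun.ofFun (f i)) := by
  rw [(UniformFun.hasBasis_uniformity_of_basis X Y uniformity_basis_dist).totallyBounded_iff]
  intro ε hε
  obtain ⟨S, hS, hSf⟩ := hfe.exists_finite_net_s11 (div_pos hε four_pos)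
  obtain ⟨N, hN, hNf⟩ := exists_finite_uniform_net hf hS (div_pos hε four_pos)
    fun x => (hSf x).imp fun s hs => ⟨hs.1, fun i => hs.2 (f i) (mem_range_self i)⟩
  refine ⟨(fun i => UniformFun.ofFun (f i)) '' N, hN.image _, ?_⟩
  rintro - ⟨i, rfl⟩
  obtain ⟨j, hjN, hij⟩ := hNf i
  refine mem_iUnion₂.2 ⟨_, mem_image_of_mem _ hjN, fun x => ?_⟩
  simpa [mul_div_cancel₀ ε four_ne_zero] using hij x

theorem stmt11_general {X : Type*} [TopologicalSpace X] [CompactSpace X]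
    (f : ℕ → X → ℝ)
    (hub : ∃ M : ℝ, ∀ n, ∀ x, |f n x| ≤ M)
    (hfe : FinEquicont (Set.range f)) :
    ∃ φ : ℕ → ℕ, StrictMono φ ∧ ∃ g : X → ℝ,
      TendstoUniformly (fun k => f (φ k)) g atTop := by
  obtain ⟨M, hM⟩ := hub
  have hbdd : ∀ x, TotallyBounded (range fun n => f n x) := fun x =>
    (isCompact_closedBall (0 : ℝ) M).totallyBounded.subset <| by
      rintro - ⟨n, rfl⟩
      simpa using hM n x
  obtain ⟨g, φ, hφ, hg⟩ := (totallyBounded_range_ofFun_of_finEquicont hbdd hfe).tendsto_subseq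
  exact ⟨φ, hφ, UniformFun.toFun g, UniformFun.tendsto_iff_tendstoUniformly.1 hg⟩

theorem stmt11 {X : Type*} [TopologicalSpace X] [CompactSpace X]
    (f : ℕ → X → ℝ) (hlsc : ∀ n, LowerSemicontinuous (f n))
    (hub : ∃ M : ℝ, ∀ n, ∀ x, |f n x| ≤ M)
    (hfe : FinEquicont (Set.range f)) :
    ∃ φ : ℕ → ℕ, StrictMono φ ∧ ∃ g : X → ℝ,
      TendstoUniformly (fun k => f (φ k)) g atTop :=
  stmt11_general f hub hfe
end

section
/- Let X be a topological space and (Y,d) a metric space. If a net of quasicontinuous functions f_σ: X → Y converges uniformly on X to f: X → Y, then f is quasicontinuous. -/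
open Set Filter Topology Metric Bornology

/-!
Quasicontinuity of `f` at `x` says that `x` lies in the closure of the interior of `f ⁻¹' V` for
every neighbourhood `V` of `f x`. If `F σ` is uniformly `T`-close to `f` for a symmetric entourage
`T` with `T ○ T ○ T ⊆ S`, then `(F σ) ⁻¹' ball (F σ x) T ⊆ f ⁻¹' ball (f x) S`, so this property
passes from `F σ` to `f`.
-/

theorem quasiContAt_iff_mem_closure_interior_preimage {X Y : Type*} [TopologicalSpace X]
    [TopologicalSpace Y] {f : X → Y} {x : X} :
    QuasiContAt f x ↔ ∀ V ∈ 𝓝 (f x), x ∈ closure (interior (f ⁻¹' V)) := by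
  constructor
  · intro hf V hV
    obtain ⟨V', hV'V, hV'o, hxV'⟩ := mem_nhds_iff.1 hV
    refine mem_closure_iff.2 fun U hU hxU => ?_
    obtain ⟨W, hWo, ⟨w, hw⟩, hWU, hWV'⟩ := hf V' hV'o hxV' U hU hxU
    have hWV : W ⊆ f ⁻¹' V := fun z hz => hV'V (hWV' (mem_image_of_mem f hz))
    exact ⟨w, hWU hw, interior_maximal hWV hWo hw⟩
  · intro hf V hVo hxV U hU hxU
    refine ⟨U ∩ interior (f ⁻¹' V), hU.inter isOpen_interior,
      mem_closure_iff.1 (hf V (hVo.mem_nhds hxV)) U hU hxU, inter_subset_left, ?_⟩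
    rintro _ ⟨w, ⟨-, hw⟩, rfl⟩
    exact interior_subset (s := f ⁻¹' V) hw

open UniformSpace in
theorem TendstoUniformly.quasiContAt {X Y ι : Type*} [TopologicalSpace X] [UniformSpace Y]
    {l : Filter ι} {F : ι → X → Y} {f : X → Y} {x : X}
    (h : TendstoUniformly F f l) (hq : ∃ᶠ σ in l, QuasiContAt (F σ) x) :
    QuasiContAt f x := by
  refine quasiContAt_iff_mem_closure_interior_preimage.2 fun V hV => ?_
  obtain ⟨S, hS, hSV⟩ := UniformSpace.mem_nhds_iff.1 hV
  obtain ⟨T, hT, hTsymm, hTS⟩ := comp_comp_symm_mem_uniformity_sets hS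
  obtain ⟨σ, hσq, hσT⟩ := (hq.and_eventually (h T hT)).exists
  have hpreimage : F σ ⁻¹' ball (F σ x) T ⊆ f ⁻¹' V := fun w hw =>
    hSV <| hTS <| mem_ball_comp (mem_ball_comp (hσT x) hw) (mem_ball_symmetry.1 (hσT w))
  exact closure_mono (interior_mono hpreimage)
    (quasiContAt_iff_mem_closure_interior_preimage.1 hσq _ (ball_mem_nhds _ hT))

theorem stmt14 {X Y ι : Type*} [TopologicalSpace X] [MetricSpace Y]
    (l : Filter ι) [l.NeBot] (F : ι → X → Y) (f : X → Y)
    (hq : ∀ σ : ι, QuasiCont (F σ))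
    (h : TendstoUniformly F f l) :
    QuasiCont f :=
  fun x => h.quasiContAt (Frequently.of_forall fun σ => hq σ x)
end

section
/- Every locally compact, separable metrizable space admits a compatible metric d such that every closed d-bounded subset is compact (i.e. it is boundedly compact under d). -/
/-!
Pick a compact exhaustion `K₀ ⊆ K₁ ⊆ ⋯` with `Kₙ ⊆ interior Kₙ₊₁` and Urysohn functions
`fₙ : X → [0, 1]` vanishing on `Kₙ` and equal to `1` off `interior Kₙ₊₁`. The locally finite sum
`F = ∑ fₙ` is continuous and `F ≥ N` off `K_N`, so its sublevel sets are compact. Replacing any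
compatible metric `d` by `max (d x y) |F x - F y|` (the metric of the graph of `F`) keeps the
topology and makes `F` `1`-Lipschitz, so bounded sets lie in sublevel sets of `F`.
-/

open Set Filter Topology Metric Bornology

section ExhaustionFunction

variable {X : Type*} [TopologicalSpace X] [RegularSpace X] [LocallyCompactSpace X]

theorem CompactExhaustion.exists_continuous_nat_le_of_notMem (K : CompactExhaustion X) :
    ∃ F : C(X, ℝ), ∀ (N : ℕ) (x : X), x ∉ K N → (N : ℝ) ≤ F x := by
  have hurysohn : ∀ n : ℕ, ∃ f : C(X, ℝ), EqOn f 0 (K n) ∧ EqOn f 1 (interior (K (n + 1)))ᶜ ∧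
      ∀ x, f x ∈ Icc (0 : ℝ) 1 := fun n ↦
    exists_continuous_zero_one_of_isCompact (K.isCompact n) isOpen_interior.isClosed_compl
      (disjoint_compl_right.mono_left (K.subset_interior_succ n))
  choose f hf0 hf1 hf01 using hurysohn
  have hsupport : ∀ {m n : ℕ} {x : X}, x ∈ K m → f n x ≠ 0 → n < m := fun hx hfx ↦
    not_le.1 fun hmn ↦ hfx (hf0 _ (K.subset hmn hx))
  have hlocfin : LocallyFinite fun n ↦ Function.support (f n) := by
    intro x
    obtain ⟨m, hm⟩ := K.exists_mem x
    refine ⟨interior (K (m + 1)), isOpen_interior.mem_nhds (K.subset_interior_succ m hm),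
      (finite_Iio (m + 1)).subset ?_⟩
    rintro n ⟨y, hy, hyU⟩
    exact hsupport (interior_subset hyU) hy
  refine ⟨⟨fun x ↦ ∑ᶠ n, f n x, continuous_finsum (fun n ↦ (f n).continuous) hlocfin⟩,
    fun N x hx ↦ ?_⟩
  obtain ⟨m, hm⟩ := K.exists_mem x
  have hNm : N ≤ m := not_lt.1 fun h ↦ hx (K.subset h.le hm)
  calc (N : ℝ) = ∑ n ∈ Finset.range N, f n x := by
        rw [Finset.sum_congr rfl fun n hn ↦ hf1 n fun hxn ↦
          hx (K.subset (Finset.mem_range.1 hn) (interior_subset hxn))]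
        simp
    _ ≤ ∑ n ∈ Finset.range m, f n x :=
        Finset.sum_le_sum_of_subset_of_nonneg (Finset.range_subset_range.2 hNm)
          fun n _ _ ↦ (hf01 n x).1
    _ = ∑ᶠ n, f n x := (finsum_eq_sum_of_support_subset _ fun n hn ↦
          Finset.coe_range m ▸ hsupport hm hn).symm

theorem exists_continuous_isCompact_preimage_Iic [SigmaCompactSpace X] :
    ∃ F : C(X, ℝ), ∀ c : ℝ, IsCompact (F ⁻¹' Iic c) := by
  let K : CompactExhaustion X := default
  obtain ⟨F, hF⟩ := K.exists_continuous_nat_le_of_notMem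
  refine ⟨F, fun c ↦ (K.isCompact (⌈c⌉₊ + 1)).of_isClosed_subset
    (isClosed_Iic.preimage F.continuous) fun x hx ↦ ?_⟩
  by_contra hxK
  have hN := hF _ x hxK
  push_cast at hN
  linarith [Nat.le_ceil c, show F x ≤ c from hx]

end ExhaustionFunction

theorem ProperSpace.of_lipschitzWith_isCompact_preimage_Iic {X : Type*} [PseudoMetricSpace X]
    {F : X → ℝ} {L : NNReal} (hF : LipschitzWith L F) (hc : ∀ c, IsCompact (F ⁻¹' Iic c)) :
    ProperSpace X where
  isCompact_closedBall x r := by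
    obtain ⟨c, hc'⟩ := (hF.isBounded_image isBounded_closedBall).bddAbove
    exact (hc c).of_isClosed_subset isClosed_closedBall fun y hy ↦ hc' (mem_image_of_mem F hy)

theorem stmt19 {X : Type*} [t : TopologicalSpace X] [LocallyCompactSpace X]
    [TopologicalSpace.MetrizableSpace X] [TopologicalSpace.SeparableSpace X] :
    ∃ m : MetricSpace X, m.toUniformSpace.toTopologicalSpace = t ∧
      ∀ s : Set X, IsClosed s → @Bornology.IsBounded X m.toBornology s → IsCompact s := by
  let := TopologicalSpace.metrizableSpaceMetric X
  have : SecondCountableTopology X := UniformSpace.secondCountable_of_separable X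
  obtain ⟨F, hF⟩ := exists_continuous_isCompact_preimage_Iic (X := X)
  let m : MetricSpace X := (isEmbedding_graph F.continuous).comapMetricSpace _
  have hLip : LipschitzWith 1 F := LipschitzWith.mk_one fun _ _ ↦ le_max_right _ _
  have := ProperSpace.of_lipschitzWith_isCompact_preimage_Iic hLip hF
  exact ⟨m, rfl, fun s hs hb ↦ isCompact_of_isClosed_isBounded hs hb⟩
end
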